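/- Let 𝒜 be a C*-algebra with the following property: every bounded ℝ-linear operator L on 𝒜_sa such that sup_{t ∈ ℝ} ‖exp(tL)‖ < ∞ and exp(tL) is completely positive for every t ∈ ℝ satisfies exp(tL) = id for all t ∈ ℝ. Then 𝒜 is commutative. -/

import Mathlib

open scoped ENNReal

variable {A : Type*} [NonUnitalCStarAlgebra A] [PartialOrder A] [StarOrderedRing A]

noncomputable instance : NormedSpace ℝ (selfAdjoint A) where
  norm_smul_le r x := norm_smul_le r (x : A)

instance : CompleteSpace (selfAdjoint A) :=
  (isClosed_eq continuous_star continuous_id).completeSpace_coe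

instance : IsTopologicalRing (selfAdjoint A →L[ℝ] selfAdjoint A) :=
  @NonUnitalSeminormedRing.toIsTopologicalRing (selfAdjoint A →L[ℝ] selfAdjoint A) _

/-- A bounded real-linear operator on the self-adjoint part of a C*-algebra is *positive*
if it maps the positive cone into itself. -/
def IsPositiveOp (L : selfAdjoint A →L[ℝ] selfAdjoint A) : Prop :=
  ∀ x : selfAdjoint A, 0 ≤ x → 0 ≤ L x

/-- `L` is *quasi-positive* if `L + α • id` is positive for some `α ≥ 0`. -/
def IsQuasiPositiveOp (L : selfAdjoint A →L[ℝ] selfAdjoint A) : Prop :=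
  ∃ α : ℝ, 0 ≤ α ∧ IsPositiveOp (L + α • ContinuousLinearMap.id ℝ (selfAdjoint A))

/-- `L` is *exponentially positive* if `exp (t • L)` is positive for all `t ≥ 0`. -/
def IsExpPositiveOp (L : selfAdjoint A →L[ℝ] selfAdjoint A) : Prop :=
  ∀ t : ℝ, 0 ≤ t → IsPositiveOp (NormedSpace.exp (t • L))

/-- `L` is *cross positive* if `φ (L x) ≥ 0` whenever `x ≥ 0` and `φ` is a positive bounded
functional with `φ x = 0`. -/
def IsCrossPositiveOp (L : selfAdjoint A →L[ℝ] selfAdjoint A) : Prop :=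
  ∀ (x : selfAdjoint A) (φ : selfAdjoint A →L[ℝ] ℝ), 0 ≤ x →
    (∀ y : selfAdjoint A, 0 ≤ y → 0 ≤ φ y) → φ x = 0 → 0 ≤ φ (L x)

/-- An element of the C*-algebra of `k × k` matrices over `A` is positive if and only if it is
of the form `star x * x`. -/
def MatrixIsPositive {k : ℕ} (m : Matrix (Fin k) (Fin k) A) : Prop :=
  ∃ x : Matrix (Fin k) (Fin k) A, m = star x * x

/-- A bounded complex-linear operator `T` on `A` is *completely positive* if, for every `k`,
applying `T` entrywise to `k × k` matrices over `A` maps positive matrices to positive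
matrices. -/
def IsCompletelyPositiveC (T : A →L[ℂ] A) : Prop :=
  ∀ (k : ℕ) (m : Matrix (Fin k) (Fin k) A), MatrixIsPositive m → MatrixIsPositive (m.map T)

/-- `T : A →L[ℂ] A` extends the operator `L` on the self-adjoint part of `A`.  (Such an
extension is unique since `A = A_sa ⊕ i A_sa`.) -/
def ExtendsOp (L : selfAdjoint A →L[ℝ] selfAdjoint A) (T : A →L[ℂ] A) : Prop :=
  ∀ x : selfAdjoint A, T x = L x

/-- A bounded real-linear operator on the self-adjoint part of `A` is *completely positive*
if its (unique) bounded complex-linear extension to `A` is completely positive. -/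
def IsCompletelyPositiveOp (L : selfAdjoint A →L[ℝ] selfAdjoint A) : Prop :=
  ∃ T : A →L[ℂ] A, ExtendsOp L T ∧ IsCompletelyPositiveC T

/-- `L` is *power bounded* if `sup_n ‖L ^ n‖ < ∞`. -/
def PowerBounded (L : selfAdjoint A →L[ℝ] selfAdjoint A) : Prop :=
  ∃ C : ℝ, ∀ n : ℕ, ‖L ^ n‖ ≤ C

/-- A subset `S ⊆ ℂ` is *cyclic* if `r * exp (i θ) ∈ S` (with `r ≥ 0`, `θ ∈ ℝ`) implies
`r * exp (i n θ) ∈ S` for every integer `n`. -/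
def IsCyclicSet (S : Set ℂ) : Prop :=
  ∀ (r θ : ℝ), 0 ≤ r → (r : ℂ) * Complex.exp ((θ : ℂ) * Complex.I) ∈ S →
    ∀ n : ℤ, (r : ℂ) * Complex.exp ((n : ℂ) * (θ : ℂ) * Complex.I) ∈ S

/-!
For self-adjoint `h`, the operator `x ↦ i (h x - x h)` on `A_sa` generates the group
`x ↦ e^{ith} x e^{-ith}` of conjugations by unitaries of the unitization of `A`. This group is
contractive and completely positive, so by hypothesis it is trivial; differentiating at `t = 0`
shows that its generator vanishes, i.e. `h` is central. Since the self-adjoint elements span `A`,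
`A` is commutative.
-/

open NormedSpace MulOpposite ComplexStarModule
open Complex (I)

theorem eq_zero_of_forall_exp_smul_eq_one {𝔸 : Type*} [NormedRing 𝔸] [NormedAlgebra ℝ 𝔸]
    [CompleteSpace 𝔸] {L : 𝔸} (h : ∀ t : ℝ, exp (t • L) = 1) : L = 0 := by
  have hderiv := hasDerivAt_exp_smul_const (𝕂 := ℝ) L 0
  rw [zero_smul, NormedSpace.exp_zero, one_mul, funext h] at hderiv
  exact hderiv.unique (hasDerivAt_const 0 1)

section
variable {A : Type*} [NonUnitalCStarAlgebra A]

noncomputable def complexifyCLM (T : selfAdjoint A →L[ℝ] selfAdjoint A) : A →L[ℂ] A :=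
  LinearMap.mkContinuous
    { toFun a := (T (ℜ a) : A) + I • (T (ℑ a) : A)
      map_add' a b := by simp only [map_add, AddSubgroup.coe_add, smul_add]; abel
      map_smul' z a := by
        simp only [realPart_smul, imaginaryPart_smul, map_add, map_sub, map_smul,
          AddSubgroup.coe_add, AddSubgroup.coe_sub, selfAdjoint.val_smul, RingHom.id_apply]
        conv_rhs => rw [← Complex.re_add_im z]
        simp only [← Complex.coe_smul]
        linear_combination (norm := module)
          (-(z.im : ℂ)) • Complex.I_mul_I • (T (ℑ a) : A) }
    (2 * ‖T‖) fun a => by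
      calc ‖(T (ℜ a) : A) + I • (T (ℑ a) : A)‖ ≤ ‖T (ℜ a)‖ + ‖T (ℑ a)‖ := by
            simpa [norm_smul] using norm_add_le (T (ℜ a) : A) (I • (T (ℑ a) : A))
        _ ≤ ‖T‖ * ‖a‖ + ‖T‖ * ‖a‖ := by
            gcongr
            · exact T.le_opNorm_of_le (realPart.norm_le a)
            · exact T.le_opNorm_of_le (imaginaryPart.norm_le a)
        _ = 2 * ‖T‖ * ‖a‖ := by ring

lemma complexifyCLM_apply (T : selfAdjoint A →L[ℝ] selfAdjoint A) (a : A) :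
    complexifyCLM T a = (T (ℜ a) : A) + I • (T (ℑ a) : A) := rfl

@[simp]
lemma complexifyCLM_apply_coe (T : selfAdjoint A →L[ℝ] selfAdjoint A) (x : selfAdjoint A) :
    complexifyCLM T x = T x := by
  simp [complexifyCLM_apply]

lemma norm_complexifyCLM_le (T : selfAdjoint A →L[ℝ] selfAdjoint A) :
    ‖complexifyCLM T‖ ≤ 2 * ‖T‖ :=
  LinearMap.mkContinuous_norm_le _ (by positivity) _

lemma norm_le_norm_complexifyCLM (T : selfAdjoint A →L[ℝ] selfAdjoint A) :
    ‖T‖ ≤ ‖complexifyCLM T‖ :=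
  T.opNorm_le_bound (norm_nonneg _) fun x => by
    simpa using (complexifyCLM T).le_opNorm x

noncomputable def complexify : (selfAdjoint A →L[ℝ] selfAdjoint A) →+* (A →L[ℂ] A) where
  toFun := complexifyCLM
  map_one' := by ext a; simp [complexifyCLM_apply, realPart_add_I_smul_imaginaryPart]
  map_mul' T S := by ext a; simp [complexifyCLM_apply]
  map_zero' := by ext a; simp [complexifyCLM_apply]
  map_add' T S := by ext a; simp [complexifyCLM_apply]; abel

lemma complexify_apply (T : selfAdjoint A →L[ℝ] selfAdjoint A) :
    complexify T = complexifyCLM T := rfl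

lemma complexify_smul (t : ℝ) (T : selfAdjoint A →L[ℝ] selfAdjoint A) :
    complexify (t • T) = t • complexify T := by
  ext a
  simp [complexify_apply, complexifyCLM_apply, smul_comm t I]

lemma continuous_complexify : Continuous (complexify (A := A)) :=
  AddMonoidHomClass.continuous_of_bound (complexify (A := A)) 2 norm_complexifyCLM_le

lemma complexify_exp (T : selfAdjoint A →L[ℝ] selfAdjoint A) :
    complexify (exp T) = exp (complexify T) :=
  let +nondep : NormedAlgebra ℚ (selfAdjoint A →L[ℝ] selfAdjoint A) :=
    .restrictScalars ℚ ℝ _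
  let +nondep : NormedAlgebra ℚ (A →L[ℂ] A) := .restrictScalars ℚ ℂ _
  map_exp _ continuous_complexify T

noncomputable def restrictSelfAdjoint (T : A →L[ℂ] A) (hT : ∀ a, T (star a) = star (T a)) :
    selfAdjoint A →L[ℝ] selfAdjoint A :=
  LinearMap.mkContinuous
    { toFun x := ⟨T x, by rw [selfAdjoint.mem_iff, ← hT, x.prop.star_eq]⟩
      map_add' x y := Subtype.ext (map_add T (x : A) y)
      map_smul' r x := Subtype.ext (T.map_smul_of_tower r (x : A)) }
    ‖T‖ fun x => T.le_opNorm x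

lemma complexify_restrictSelfAdjoint (T : A →L[ℂ] A) (hT : ∀ a, T (star a) = star (T a)) :
    complexify (restrictSelfAdjoint T hT) = T := by
  ext a
  conv_rhs => rw [← realPart_add_I_smul_imaginaryPart a, map_add, map_smul]
  rfl

lemma mul_comm_of_forall_selfAdjoint_mul_comm (h : ∀ (s : selfAdjoint A) (a : A), s * a = a * s)
    (a b : A) : a * b = b * a := by
  rw [← realPart_add_I_smul_imaginaryPart a, add_mul, mul_add, smul_mul_assoc, mul_smul_comm, h,
    h]

namespace Unitization

lemma inr_snd_of_fst_eq_zero {R B : Type*} [Zero R] {p : Unitization R B} (hp : p.fst = 0) :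
    (p.snd : Unitization R B) = p :=
  Unitization.ext (by simp [hp]) (snd_inr R p.snd)

noncomputable def mulLeftRight (u v : Unitization ℂ A) : A →L[ℂ] A :=
  LinearMap.mkContinuous
    { toFun a := (u * a * v).snd
      map_add' a b := by simp only [inr_add, mul_add, add_mul, snd_add]
      map_smul' z a := by
        simp only [inr_smul, mul_smul_comm, smul_mul_assoc, snd_smul, RingHom.id_apply] }
    (‖u‖ * ‖v‖) fun a => by
      calc ‖(u * a * v).snd‖ = ‖u * a * v‖ := by
            rw [← norm_inr (𝕜 := ℂ), inr_snd_of_fst_eq_zero (by simp)]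
        _ ≤ ‖u‖ * ‖v‖ * ‖a‖ := by
            rw [mul_right_comm, ← norm_inr (𝕜 := ℂ) a]
            exact (norm_mul_le _ _).trans (by gcongr; exact norm_mul_le _ _)

@[simp]
lemma mulLeftRight_apply (u v : Unitization ℂ A) (a : A) :
    mulLeftRight u v a = (u * a * v).snd := rfl

lemma inr_mulLeftRight_apply (u v : Unitization ℂ A) (a : A) :
    (mulLeftRight u v a : Unitization ℂ A) = u * a * v :=
  inr_snd_of_fst_eq_zero (p := u * (a : Unitization ℂ A) * v) (by simp)

lemma norm_mulLeftRight_le (u v : Unitization ℂ A) :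
    ‖mulLeftRight u v‖ ≤ ‖u‖ * ‖v‖ :=
  LinearMap.mkContinuous_norm_le _ (by positivity) _

lemma mulLeftRight_mul_mulLeftRight (u v u' v' : Unitization ℂ A) :
    mulLeftRight u v * mulLeftRight u' v' = mulLeftRight (u * u') (v' * v) := by
  ext a
  rw [mul_apply_eq_comp, mulLeftRight_apply u v, inr_mulLeftRight_apply]
  simp only [mulLeftRight_apply, mul_assoc]

lemma star_mulLeftRight_apply (u v : Unitization ℂ A) (a : A) :
    star (mulLeftRight u v a) = mulLeftRight (star v) (star u) (star a) := by
  rw [mulLeftRight_apply, mulLeftRight_apply, ← snd_star, star_mul, star_mul, inr_star, mul_assoc]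

noncomputable def mulLeft : Unitization ℂ A →+* (A →L[ℂ] A) where
  toFun u := mulLeftRight u 1
  map_one' := by ext a; simp
  map_mul' u v := by rw [mulLeftRight_mul_mulLeftRight, one_mul]
  map_zero' := by ext a; simp
  map_add' u v := by ext a; simp [add_mul]

noncomputable def mulRight : (Unitization ℂ A)ᵐᵒᵖ →+* (A →L[ℂ] A) where
  toFun v := mulLeftRight 1 v.unop
  map_one' := by ext a; simp
  map_mul' u v := by rw [mulLeftRight_mul_mulLeftRight, one_mul, unop_mul]
  map_zero' := by ext a; simp
  map_add' u v := by ext a; simp [mul_add]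

lemma mulLeft_apply (u : Unitization ℂ A) : mulLeft u = mulLeftRight u 1 := rfl

lemma mulRight_op (v : Unitization ℂ A) : mulRight (op v) = mulLeftRight 1 v := rfl

lemma continuous_mulLeft : Continuous (mulLeft (A := A)) :=
  AddMonoidHomClass.continuous_of_bound mulLeft 1 fun u => by
    simpa [mulLeft_apply] using norm_mulLeftRight_le u 1

lemma continuous_mulRight : Continuous (mulRight (A := A)) :=
  AddMonoidHomClass.continuous_of_bound mulRight 1 fun v => by
    simpa [mulRight, norm_unop] using norm_mulLeftRight_le 1 v.unop

lemma exp_mulLeft_add_mulRight (u v : Unitization ℂ A) :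
    exp (mulLeft u + mulRight (op v)) = mulLeftRight (exp u) (exp v) := by
  let +nondep : NormedAlgebra ℚ (Unitization ℂ A) := .restrictScalars ℚ ℂ _
  let +nondep : NormedAlgebra ℚ (A →L[ℂ] A) := .restrictScalars ℚ ℂ _
  have hcomm : Commute (mulLeft u) (mulRight (op v)) := by
    simp only [Commute, SemiconjBy, mulLeft_apply, mulRight_op, mulLeftRight_mul_mulLeftRight,
      one_mul, mul_one]
  rw [exp_add_of_commute hcomm, ← map_exp _ continuous_mulLeft, ← map_exp _ continuous_mulRight,
    exp_op, mulLeft_apply, mulRight_op, mulLeftRight_mul_mulLeftRight, mul_one, mul_one]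

lemma mulLeftRight_smul_left (c : ℂ) (u v : Unitization ℂ A) :
    mulLeftRight (c • u) v = c • mulLeftRight u v := by
  ext a
  simp

lemma mulLeftRight_smul_right (c : ℂ) (u v : Unitization ℂ A) :
    mulLeftRight u (c • v) = c • mulLeftRight u v := by
  ext a
  simp

lemma mulLeftRight_star_mul (u : Unitization ℂ A) (b c : A) :
    mulLeftRight u (star u) (star b * c)
      = star (mulLeftRight 1 (star u) b) * mulLeftRight 1 (star u) c := by
  apply inr_injective (R := ℂ)
  simp only [inr_mul, inr_star, inr_mulLeftRight_apply, star_mul, star_star, one_mul, mul_assoc]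

lemma isCompletelyPositiveC_mulLeftRight_star (u : Unitization ℂ A) :
    IsCompletelyPositiveC (mulLeftRight u (star u)) := by
  rintro k m ⟨x, rfl⟩
  refine ⟨x.map (mulLeftRight 1 (star u)), ?_⟩
  ext i j
  simp only [Matrix.map_apply, Matrix.mul_apply, Matrix.star_apply, map_sum,
    mulLeftRight_star_mul]

/-- For skew-adjoint `w` this is `a ↦ w a - a w`, the generator of `a ↦ e^{tw} a e^{-tw}`. -/
noncomputable def conjGenerator (w : Unitization ℂ A) : A →L[ℂ] A :=
  mulLeft w + mulRight (op (star w))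

lemma conjGenerator_map_star (w : Unitization ℂ A) (a : A) :
    conjGenerator w (star a) = star (conjGenerator w a) := by
  simp only [conjGenerator, add_apply, mulLeft_apply, mulRight_op, star_add,
    star_mulLeftRight_apply, star_one, star_star, add_comm]

lemma real_smul_conjGenerator (t : ℝ) (w : Unitization ℂ A) :
    t • conjGenerator w = conjGenerator ((t : ℂ) • w) := by
  rw [conjGenerator, conjGenerator, mulLeft_apply, mulLeft_apply, mulRight_op, mulRight_op,
    star_smul, Complex.star_def, Complex.conj_ofReal, mulLeftRight_smul_left,
    mulLeftRight_smul_right, ← smul_add, Complex.coe_smul]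

lemma exp_conjGenerator (w : Unitization ℂ A) :
    exp (conjGenerator w) = mulLeftRight (exp w) (star (exp w)) := by
  rw [conjGenerator, exp_mulLeft_add_mulRight, star_exp]

lemma conjGenerator_inr_apply (k x : A) :
    conjGenerator (k : Unitization ℂ A) x = k * x + x * star k := by
  simp [conjGenerator, mulLeft_apply, mulRight_op, ← inr_star, ← inr_mul]

lemma conjGenerator_I_smul_inr_apply (h : selfAdjoint A) (x : A) :
    conjGenerator (I • ((h : A) : Unitization ℂ A)) x = I • ((h : A) * x - x * h) := by
  rw [← inr_smul, conjGenerator_inr_apply, star_smul, h.prop.star_eq, Complex.star_def,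
    Complex.conj_I, smul_mul_assoc, mul_smul_comm, neg_smul, smul_sub, sub_eq_add_neg]

/-- For skew-adjoint `w` this is `a ↦ w a - a w`, the generator of `a ↦ e^{tw} a e^{-tw}`. -/
noncomputable def conjGeneratorSelfAdjoint (w : Unitization ℂ A) :
    selfAdjoint A →L[ℝ] selfAdjoint A :=
  restrictSelfAdjoint (conjGenerator w) (conjGenerator_map_star w)

lemma complexify_conjGeneratorSelfAdjoint (w : Unitization ℂ A) :
    complexify (conjGeneratorSelfAdjoint w) = conjGenerator w :=
  complexify_restrictSelfAdjoint _ _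

lemma complexify_exp_smul_conjGeneratorSelfAdjoint (w : Unitization ℂ A) (t : ℝ) :
    complexify (exp (t • conjGeneratorSelfAdjoint w))
      = mulLeftRight (exp ((t : ℂ) • w)) (star (exp ((t : ℂ) • w))) := by
  rw [complexify_exp, complexify_smul, complexify_conjGeneratorSelfAdjoint,
    real_smul_conjGenerator, exp_conjGenerator]

lemma isCompletelyPositiveOp_exp_smul_conjGeneratorSelfAdjoint (w : Unitization ℂ A) (t : ℝ) :
    IsCompletelyPositiveOp (exp (t • conjGeneratorSelfAdjoint w)) :=
  ⟨complexify (exp (t • conjGeneratorSelfAdjoint w)), fun x => complexifyCLM_apply_coe _ x, by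
    rw [complexify_exp_smul_conjGeneratorSelfAdjoint]
    exact isCompletelyPositiveC_mulLeftRight_star _⟩

lemma norm_exp_smul_conjGeneratorSelfAdjoint_le_one {w : Unitization ℂ A}
    (hw : w ∈ skewAdjoint (Unitization ℂ A)) (t : ℝ) :
    ‖exp (t • conjGeneratorSelfAdjoint w)‖ ≤ 1 := by
  let +nondep : NormedAlgebra ℚ (Unitization ℂ A) := .restrictScalars ℚ ℂ _
  have hu : exp ((t : ℂ) • w) ∈ unitary (Unitization ℂ A) :=
    exp_mem_unitary_of_mem_skewAdjoint (Complex.coe_smul t w ▸ skewAdjoint.smul_mem t hw)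
  calc ‖exp (t • conjGeneratorSelfAdjoint w)‖
      ≤ ‖complexify (exp (t • conjGeneratorSelfAdjoint w))‖ := norm_le_norm_complexifyCLM _
    _ ≤ ‖exp ((t : ℂ) • w)‖ * ‖star (exp ((t : ℂ) • w))‖ := by
        rw [complexify_exp_smul_conjGeneratorSelfAdjoint]
        exact norm_mulLeftRight_le _ _
    _ = 1 := by rw [norm_star, CStarRing.norm_coe_unitary ⟨_, hu⟩, one_mul]

end Unitization

end

open Unitization

/-- If every bounded, completely positive one-parameter group `(exp (t • L))_{t ∈ ℝ}` on the
self-adjoint part of a C*-algebra `A` is trivial, then `A` is commutative. -/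
theorem commutative_of_bounded_completelyPositive_group_trivial
    (htriv : ∀ L : selfAdjoint A →L[ℝ] selfAdjoint A,
      (∃ C : ℝ, ∀ t : ℝ, ‖NormedSpace.exp (t • L)‖ ≤ C) →
      (∀ t : ℝ, IsCompletelyPositiveOp (NormedSpace.exp (t • L))) →
      ∀ t : ℝ, NormedSpace.exp (t • L) = ContinuousLinearMap.id ℝ (selfAdjoint A)) :
    ∀ a b : A, a * b = b * a := by
  refine mul_comm_of_forall_selfAdjoint_mul_comm fun h x => ?_
  set w : Unitization ℂ A := I • ((h : A) : Unitization ℂ A)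
  have hw : w ∈ skewAdjoint (Unitization ℂ A) :=
    (h.prop.inr (R := ℂ)).smul_mem_skewAdjoint Complex.conj_I
  have hL : conjGeneratorSelfAdjoint w = 0 :=
    eq_zero_of_forall_exp_smul_eq_one (𝔸 := selfAdjoint A →L[ℝ] selfAdjoint A) <| htriv _
      ⟨1, norm_exp_smul_conjGeneratorSelfAdjoint_le_one hw⟩
      (isCompletelyPositiveOp_exp_smul_conjGeneratorSelfAdjoint w)
  have hx : conjGenerator w x = 0 := by
    rw [← complexify_conjGeneratorSelfAdjoint, hL, map_zero, zero_apply]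
  rw [conjGenerator_I_smul_inr_apply, smul_eq_zero, sub_eq_zero] at hx
  exact hx.resolve_left Complex.I_ne_zero
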